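/- arXiv:1207.0610 — 5 statements merged into one kernel-verified Lean document; each statement's English description precedes it below -/
import Mathlib

section
/- Let R be a commutative ring and let 𝔞, 𝔟 ⊆ R be ideals. Then Γ_𝔞(M) = Γ_𝔟(M) for every R-module M if and only if the 𝔞-adic and 𝔟-adic topologies on R coincide, i.e., if and only if for every n ∈ ℕ there exists m ∈ ℕ with 𝔟^m ⊆ 𝔞^n, and for every n ∈ ℕ there exists m ∈ ℕ with 𝔞^m ⊆ 𝔟^n. (Corollary 1.20.) -/
lemma torsionOf_quotient_one {R : Type u} [CommRing R] (I : Ideal R) :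
    Ideal.torsionOf R (R ⧸ I) (1 : R ⧸ I) = I := by
  ext r
  simp only [Ideal.mem_torsionOf_iff, smul_eq_mul, mul_one]
  show r • (1 : R ⧸ I) = 0 ↔ r ∈ I
  rw [show r • (1 : R ⧸ I) = Ideal.Quotient.mk I r by
    simpa using (Submodule.Quotient.mk_smul I r (1 : R)).symm]
  exact Ideal.Quotient.eq_zero_iff_mem

/-- Corollary 1.20: for ideals `𝔞, 𝔟` of a commutative ring `R`,
the torsion functors `Γ_𝔞` and `Γ_𝔟` coincide if and only if the `𝔞`-adic and
`𝔟`-adic topologies on `R` coincide, i.e. each power of either ideal contains a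
power of the other. -/
theorem torsion_eq_iff_adic_topologies_eq {R : Type u} [CommRing R] (𝔞 𝔟 : Ideal R) :
    (∀ (M : Type u) [AddCommGroup M] [Module R M] (x : M),
        (∃ n : ℕ, 𝔞 ^ n ≤ Ideal.torsionOf R M x) ↔
          (∃ n : ℕ, 𝔟 ^ n ≤ Ideal.torsionOf R M x)) ↔
      ((∀ n : ℕ, ∃ m : ℕ, 𝔟 ^ m ≤ 𝔞 ^ n) ∧ (∀ n : ℕ, ∃ m : ℕ, 𝔞 ^ m ≤ 𝔟 ^ n)) := by
  constructor
  · intro h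
    constructor
    · intro n
      have := (h (R ⧸ (𝔞 ^ n)) (1 : R ⧸ (𝔞 ^ n))).mp
      rw [torsionOf_quotient_one] at this
      exact this ⟨n, le_rfl⟩
    · intro n
      have := (h (R ⧸ (𝔟 ^ n)) (1 : R ⧸ (𝔟 ^ n))).mpr
      rw [torsionOf_quotient_one] at this
      exact this ⟨n, le_rfl⟩
  · rintro ⟨h1, h2⟩ M _ _ x
    constructor
    · rintro ⟨n, hn⟩
      obtain ⟨m, hm⟩ := h1 n
      exact ⟨m, hm.trans hn⟩
    · rintro ⟨n, hn⟩
      obtain ⟨m, hm⟩ := h2 n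
      exact ⟨m, hm.trans hn⟩
end

section
/- Let R be a commutative ring and let 𝔞 ⊆ R be an ideal. Then Γ_𝔞 = Γ_{√𝔞} (i.e., Γ_𝔞(M) = Γ_{√𝔞}(M) for every R-module M) holds if and only if there exists n ∈ ℕ with (√𝔞)^n ⊆ 𝔞. (Corollary 1.30 a).) -/
/-! The quotient `R ⧸ 𝔞`, whose generator `1` has annihilator `𝔞`, is `√𝔞`-torsion, so if the two
torsion functors agree some power of `√𝔞` kills it, i.e. lies in `𝔞`. Conversely `𝔞 ≤ √𝔞`, and
`(√𝔞)ⁿ ≤ 𝔞` turns `𝔞ᵐ ≤ Ann x` into `(√𝔞)ⁿᵐ ≤ Ann x`. -/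

namespace Ideal

variable {R : Type*} [CommRing R]

theorem torsionOf_quotient_mk_one (I : Ideal R) : torsionOf R (R ⧸ I) (Quotient.mk I 1) = I := by
  ext r
  rw [mem_torsionOf_iff, Algebra.smul_def, Quotient.algebraMap_eq, ← map_mul, mul_one,
    Quotient.eq_zero_iff_mem]

theorem exists_pow_le_of_exists_pow_le {I J K : Ideal R} (hJI : ∃ n, J ^ n ≤ I)
    (hI : ∃ m, I ^ m ≤ K) : ∃ k, J ^ k ≤ K := by
  obtain ⟨n, hn⟩ := hJI
  obtain ⟨m, hm⟩ := hI
  exact ⟨n * m, by rw [pow_mul]; exact (pow_right_mono hn m).trans hm⟩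

end Ideal

/-- (Corollary 1.30 a)): for an ideal `𝔞` of a commutative ring `R`,
the torsion functors `Γ_𝔞` and `Γ_√𝔞` coincide if and only if some power of `√𝔞`
is contained in `𝔞`. -/
theorem torsion_eq_torsion_radical_iff {R : Type u} [CommRing R] (𝔞 : Ideal R) :
    (∀ (M : Type u) [AddCommGroup M] [Module R M] (x : M),
        (∃ n : ℕ, 𝔞 ^ n ≤ Ideal.torsionOf R M x) ↔
          (∃ n : ℕ, 𝔞.radical ^ n ≤ Ideal.torsionOf R M x)) ↔
      ∃ n : ℕ, 𝔞.radical ^ n ≤ 𝔞 := by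
  constructor
  · intro h
    have key := (h (R ⧸ 𝔞) (Ideal.Quotient.mk 𝔞 1)).mp
    rw [Ideal.torsionOf_quotient_mk_one] at key
    exact key ⟨1, (pow_one 𝔞).le⟩
  · intro hrad M _ _ x
    exact ⟨Ideal.exists_pow_le_of_exists_pow_le hrad,
      Ideal.exists_pow_le_of_exists_pow_le ⟨1, (pow_one _).trans_le 𝔞.le_radical⟩⟩
end

section
/- Let R be a commutative ring and let 𝔞, 𝔟 ⊆ R be ideals. If Γ_𝔞 = Γ_𝔟 (i.e., Γ_𝔞(M) = Γ_𝔟(M) for every R-module M), then √𝔞 = √𝔟. Conversely, if there exist m, n ∈ ℕ with (√𝔞)^m ⊆ 𝔞 and (√𝔟)^n ⊆ 𝔟, then √𝔞 = √𝔟 implies Γ_𝔞 = Γ_𝔟. (Corollary 1.30 b).) -/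
lemma torsionOf_one_quot {R : Type u} [CommRing R] (𝔠 : Ideal R) :
    Ideal.torsionOf R (R ⧸ 𝔠) (1 : R ⧸ 𝔠) = 𝔠 := by
  ext r
  simp only [Ideal.mem_torsionOf_iff]
  rw [show r • (1 : R ⧸ 𝔠) = Ideal.Quotient.mk 𝔠 r by
    simp [Algebra.smul_def, Ideal.Quotient.algebraMap_eq]]
  exact Ideal.Quotient.eq_zero_iff_mem

lemma half {R : Type u} [CommRing R] (𝔞 𝔟 : Ideal R)
    (h : ∀ (M : Type u) [AddCommGroup M] [Module R M] (x : M),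
        (∃ n : ℕ, 𝔞 ^ n ≤ Ideal.torsionOf R M x) →
          (∃ n : ℕ, 𝔟 ^ n ≤ Ideal.torsionOf R M x)) :
    𝔟.radical ≤ 𝔞.radical := by
  obtain ⟨n, hn⟩ := h (R ⧸ 𝔞) 1 ⟨1, by rw [torsionOf_one_quot, pow_one]⟩
  rw [torsionOf_one_quot] at hn
  intro r hr
  obtain ⟨k, hk⟩ := hr
  exact ⟨k * n, by rw [pow_mul]; exact hn (Ideal.pow_mem_pow hk n)⟩

/-- (Corollary 1.30 b)): for ideals `𝔞, 𝔟` of a commutative ring `R`,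
`Γ_𝔞 = Γ_𝔟` implies `√𝔞 = √𝔟`; conversely, if some power of `√𝔞` is contained in `𝔞`
and some power of `√𝔟` is contained in `𝔟`, then `√𝔞 = √𝔟` implies `Γ_𝔞 = Γ_𝔟`. -/
theorem torsion_eq_imp_radical_eq_and_converse {R : Type u} [CommRing R] (𝔞 𝔟 : Ideal R) :
    ((∀ (M : Type u) [AddCommGroup M] [Module R M] (x : M),
        (∃ n : ℕ, 𝔞 ^ n ≤ Ideal.torsionOf R M x) ↔
          (∃ n : ℕ, 𝔟 ^ n ≤ Ideal.torsionOf R M x)) →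
      𝔞.radical = 𝔟.radical) ∧
    ((∃ m : ℕ, 𝔞.radical ^ m ≤ 𝔞) → (∃ n : ℕ, 𝔟.radical ^ n ≤ 𝔟) →
      𝔞.radical = 𝔟.radical →
      (∀ (M : Type u) [AddCommGroup M] [Module R M] (x : M),
        (∃ n : ℕ, 𝔞 ^ n ≤ Ideal.torsionOf R M x) ↔
          (∃ n : ℕ, 𝔟 ^ n ≤ Ideal.torsionOf R M x))) := by
  constructor
  · intro h
    exact le_antisymm (half 𝔟 𝔞 fun M _ _ x => (h M x).mpr)
      (half 𝔞 𝔟 fun M _ _ x => (h M x).mp)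
  · rintro ⟨m, hm⟩ ⟨n, hn⟩ hrad M _ _ x
    have hba : 𝔟 ^ m ≤ 𝔞 :=
      le_trans (Ideal.pow_right_mono (le_trans Ideal.le_radical hrad.ge) m) hm
    have hab : 𝔞 ^ n ≤ 𝔟 :=
      le_trans (Ideal.pow_right_mono (le_trans Ideal.le_radical hrad.le) n) hn
    constructor
    · rintro ⟨k, hk⟩
      exact ⟨m * k, le_trans (by rw [pow_mul]; exact Ideal.pow_right_mono hba k) hk⟩
    · rintro ⟨k, hk⟩
      exact ⟨n * k, le_trans (by rw [pow_mul]; exact Ideal.pow_right_mono hab k) hk⟩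
end

section
/- Let A be a commutative ring, I a set, R = A[(X_i)_{i∈I}] the polynomial ring, and 𝔞 ⊆ R a monomial ideal. Then √𝔞 = nil(R) + ⌊𝔞⌋, where nil(R) is the nilradical of R and √𝔞 is the radical of 𝔞. (Lemma 2.05 a).) -/
open MvPolynomial

/-- `suppInd μ` is the characteristic function of the support of `μ`,
so that `X^(suppInd μ) = ∏_{i : μ i > 0} X i`. -/
noncomputable def suppInd {I : Type v} (μ : I →₀ ℕ) : I →₀ ℕ :=
  μ.mapRange (fun n => if n = 0 then 0 else 1) (by simp)

/-- A monomial ideal of `A[(X_i)_{i ∈ I}]` is an ideal generated by a set of monomials. -/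
def IsMonomialIdeal {A : Type u} [CommRing A] {I : Type v}
    (𝔞 : Ideal (MvPolynomial I A)) : Prop :=
  ∃ E : Set (I →₀ ℕ), 𝔞 = Ideal.span ((fun μ => monomial μ (1 : A)) '' E)

/-- `⌊𝔞⌋` is the ideal generated by the monomials `X^(suppInd μ)` for all monomials
`X^μ ∈ 𝔞`. -/
noncomputable def mvFloor {A : Type u} [CommRing A] {I : Type v}
    (𝔞 : Ideal (MvPolynomial I A)) : Ideal (MvPolynomial I A) :=
  Ideal.span {f | ∃ μ : I →₀ ℕ, monomial μ (1 : A) ∈ 𝔞 ∧ f = monomial (suppInd μ) (1 : A)}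


/-! Both `nil(R)` and `⌊𝔞⌋` lie in `√𝔞`, the latter because `(X^{sq μ})^{|μ|}` is a multiple
of `X^μ`. Conversely, fix a monomial order and let `f^n ∈ 𝔞`. The coefficient of `X^{n • deg f}`
in `f^n` is `lc(f)^n`, so either `lc(f)^n = 0` and the leading term of `f` is nilpotent, or
`X^{n • deg f} ∈ 𝔞` (as `𝔞` is monomial) and then the leading term of `f` lies in `⌊𝔞⌋`, because
`sq(n • deg f) ≤ deg f`. Subtracting the leading term and inducting on the degree gives
`f ∈ nil(R) + ⌊𝔞⌋`. -/

theorem MonomialOrder.le_of_leadingTerm_mem {σ R : Type*} [CommRing R] (m : MonomialOrder σ)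
    {P J : Ideal (MvPolynomial σ R)} (hJP : J ≤ P) (hlt : ∀ f ∈ P, m.leadingTerm f ∈ J) :
    P ≤ J := by
  intro f
  induction h : m.toSyn (m.degree f) using WellFoundedLT.induction generalizing f with
  | ind d ih =>
    intro hf
    have hlt_f := hlt f hf
    rw [← sub_add_cancel f (m.leadingTerm f)]
    refine add_mem ?_ hlt_f
    by_cases h0 : f - m.leadingTerm f = 0
    · rw [h0]
      exact J.zero_mem
    · have hdeg := m.degree_sub_leadingTerm_lt_degree
        (m.degree_ne_zero_of_sub_leadingTerm_ne_zero h0)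
      exact ih _ (h ▸ hdeg) rfl (sub_mem hf (hJP hlt_f))

theorem MvPolynomial.monomial_mem_of_le {σ R : Type*} [CommSemiring R]
    {J : Ideal (MvPolynomial σ R)} {μ ν : σ →₀ ℕ} (hμ : monomial μ (1 : R) ∈ J) (hμν : μ ≤ ν)
    (c : R) : monomial ν c ∈ J :=
  J.mem_of_dvd (monomial_dvd_monomial.mpr ⟨Or.inr hμν, one_dvd c⟩) hμ

theorem suppInd_apply {I : Type*} (μ : I →₀ ℕ) (i : I) :
    suppInd μ i = if μ i = 0 then 0 else 1 :=
  Finsupp.mapRange_apply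

theorem suppInd_le_of_le_nsmul {I : Type*} {μ d : I →₀ ℕ} {n : ℕ} (h : μ ≤ n • d) :
    suppInd μ ≤ d := by
  intro i
  rw [suppInd_apply]
  split_ifs with hμ
  · exact Nat.zero_le _
  · refine Nat.one_le_iff_ne_zero.mpr fun hd => hμ ?_
    simpa [hd] using h i

theorem le_degree_nsmul_suppInd {I : Type*} (μ : I →₀ ℕ) : μ ≤ μ.degree • suppInd μ := by
  intro i
  rw [Finsupp.smul_apply, suppInd_apply, smul_eq_mul]
  split_ifs with hμ
  · simp [hμ]
  · simpa using μ.le_degree i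

theorem IsMonomialIdeal.monomial_one_mem_of_mem_support {A I : Type*} [CommRing A]
    {𝔞 : Ideal (MvPolynomial I A)} (h𝔞 : IsMonomialIdeal 𝔞) {f : MvPolynomial I A}
    (hf : f ∈ 𝔞) {ν : I →₀ ℕ} (hν : ν ∈ f.support) : monomial ν (1 : A) ∈ 𝔞 := by
  obtain ⟨E, rfl⟩ := h𝔞
  obtain ⟨μ, hμE, hμν⟩ := mem_ideal_span_monomial_image.mp hf ν hν
  have hμ : monomial μ (1 : A) ∈ Ideal.span ((fun μ => monomial μ (1 : A)) '' E) :=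
    Ideal.subset_span ⟨μ, hμE, rfl⟩
  exact monomial_mem_of_le hμ hμν 1

theorem monomial_mem_mvFloor {A I : Type*} [CommRing A] {𝔞 : Ideal (MvPolynomial I A)}
    {μ ν : I →₀ ℕ} (hμ : monomial μ (1 : A) ∈ 𝔞) (hμν : suppInd μ ≤ ν) (c : A) :
    monomial ν c ∈ mvFloor 𝔞 :=
  monomial_mem_of_le (J := mvFloor 𝔞) (Ideal.subset_span ⟨μ, hμ, rfl⟩) hμν c

theorem mvFloor_le_radical {A I : Type*} [CommRing A] (𝔞 : Ideal (MvPolynomial I A)) :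
    mvFloor 𝔞 ≤ 𝔞.radical := by
  rw [mvFloor, Ideal.span_le]
  rintro _ ⟨μ, hμ, rfl⟩
  refine ⟨μ.degree, ?_⟩
  rw [monomial_pow]
  exact monomial_mem_of_le hμ (le_degree_nsmul_suppInd μ) _

theorem MonomialOrder.leadingTerm_mem_nilradical_add_mvFloor {A I : Type*} [CommRing A]
    (m : MonomialOrder I) {𝔞 : Ideal (MvPolynomial I A)} (h𝔞 : IsMonomialIdeal 𝔞)
    {f : MvPolynomial I A} (hf : f ∈ 𝔞.radical) :
    m.leadingTerm f ∈ nilradical (MvPolynomial I A) + mvFloor 𝔞 := by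
  obtain ⟨n, hn⟩ := hf
  by_cases hc : m.leadingCoeff f ^ n = 0
  · refine Submodule.mem_sup_left (mem_nilradical.mpr ⟨n, ?_⟩)
    rw [MonomialOrder.leadingTerm, monomial_pow, hc, monomial_zero]
  · have hsupp : n • m.degree f ∈ (f ^ n).support := by
      rwa [mem_support_iff, m.coeff_pow_nsmul_degree]
    exact Submodule.mem_sup_right <| monomial_mem_mvFloor
      (h𝔞.monomial_one_mem_of_mem_support hn hsupp) (suppInd_le_of_le_nsmul le_rfl) _

/-- (Lemma 2.05 a)): for a monomial ideal `𝔞` of `A[(X_i)_{i ∈ I}]`,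
the radical of `𝔞` equals `nil(R) + ⌊𝔞⌋`, where `nil(R)` is the nilradical. -/
theorem radical_monomialIdeal_eq_nilradical_add_floor {A : Type u} [CommRing A] {I : Type v}
    (𝔞 : Ideal (MvPolynomial I A)) (h : IsMonomialIdeal 𝔞) :
    𝔞.radical = nilradical (MvPolynomial I A) + mvFloor 𝔞 := by
  obtain ⟨_, _⟩ := exists_wellFoundedGT I
  have hle : nilradical (MvPolynomial I A) + mvFloor 𝔞 ≤ 𝔞.radical :=
    sup_le (Ideal.radical_mono bot_le) (mvFloor_le_radical 𝔞)
  exact le_antisymm (MonomialOrder.lex.le_of_leadingTerm_mem hle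
    fun _ hf => MonomialOrder.lex.leadingTerm_mem_nilradical_add_mvFloor h hf) hle
end

section
/- Let A be a commutative ring, I a set, R = A[(X_i)_{i∈I}] the polynomial ring, G a commutative group, ψ : ℤ^(⊕I) → G a surjective group homomorphism, H ≤ G a subgroup of finite index, and S = R_(H). Let 𝔞, 𝔟 ⊆ R be finitely generated monomial ideals. Then the following statements are equivalent: (i) Γ_{𝔞_(H)} = Γ_{𝔟_(H)} (equality of torsion functors over S, i.e., Γ_{𝔞_(H)}(M) = Γ_{𝔟_(H)}(M) for every S-module M); (ii) √𝔞 = √𝔟; (iii) ⌊𝔞⌋ = ⌊𝔟⌋; (iv) ⌊𝔞⌋_(H) = ⌊𝔟⌋_(H). (Proposition 2.40 a).) -/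
set_option synthInstance.maxHeartbeats 1000000
set_option maxHeartbeats 1000000

open MvPolynomial

/-- The canonical embedding `ℕ^(⊕I) → ℤ^(⊕I)`. -/
noncomputable def natToInt {I : Type v} (μ : I →₀ ℕ) : I →₀ ℤ :=
  Finsupp.mapRange (Nat.cast : ℕ → ℤ) Nat.cast_zero μ

/-- The degree restriction `S = R_(H)` of `R = A[(X_i)_{i ∈ I}]` (graded via
`ψ : ℤ^(⊕I) → G`) to a subgroup `H ≤ G`: the `A`-subalgebra of `R` generated by the
monomials `X^μ` whose degree `ψ(μ)` lies in `H`. -/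
noncomputable def degRestrict (A : Type u) [CommRing A] {I : Type v} {G : Type w} [AddCommGroup G]
    (ψ : (I →₀ ℤ) →+ G) (H : AddSubgroup G) : Subalgebra A (MvPolynomial I A) :=
  Algebra.adjoin A {f | ∃ μ : I →₀ ℕ, ψ (natToInt μ) ∈ H ∧ f = monomial μ (1 : A)}

/-- The degree restriction `𝔠_(H) = 𝔠 ∩ S` of an ideal `𝔠` of `R`, as an ideal of
`S = R_(H)`. -/
noncomputable def idealRestrict {A : Type u} [CommRing A] {I : Type v} {G : Type w} [AddCommGroup G]
    (ψ : (I →₀ ℤ) →+ G) (H : AddSubgroup G) (𝔠 : Ideal (MvPolynomial I A)) :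
    Ideal (degRestrict A ψ H) :=
  Ideal.comap (degRestrict A ψ H).val 𝔠

/-- `E(𝔞)`: the set of minimal elements of `{μ ∈ ℕ^(⊕I) | X^μ ∈ 𝔞}` with respect to
the componentwise order. -/
def Emin {A : Type u} [CommRing A] {I : Type v} (𝔞 : Ideal (MvPolynomial I A)) :
    Set (I →₀ ℕ) :=
  {μ | monomial μ (1 : A) ∈ 𝔞 ∧ ∀ ν : I →₀ ℕ, monomial ν (1 : A) ∈ 𝔞 → ν ≤ μ → ν = μ}

/-- `m_μ`: the least `m ∈ ℕ` such that `X^(m • suppInd μ) ∈ 𝔞_(H) = 𝔞 ∩ S`. -/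
noncomputable def mdeg {A : Type u} [CommRing A] {I : Type v} {G : Type w} [AddCommGroup G]
    (ψ : (I →₀ ℤ) →+ G) (H : AddSubgroup G) (𝔞 : Ideal (MvPolynomial I A))
    (μ : I →₀ ℕ) : ℕ :=
  sInf {m : ℕ | monomial (m • suppInd μ) (1 : A) ∈ 𝔞 ∧
    monomial (m • suppInd μ) (1 : A) ∈ degRestrict A ψ H}

/-- `⌊𝔞⌋_H`: the ideal of `S = R_(H)` generated by the monomials `X^(m_μ • suppInd μ)`
for `μ ∈ E(𝔞)`. -/
noncomputable def floorH {A : Type u} [CommRing A] {I : Type v} {G : Type w} [AddCommGroup G]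
    (ψ : (I →₀ ℤ) →+ G) (H : AddSubgroup G) (𝔞 : Ideal (MvPolynomial I A)) :
    Ideal (degRestrict A ψ H) :=
  Ideal.span {s | ∃ μ ∈ Emin 𝔞,
    (s : MvPolynomial I A) = monomial (mdeg ψ H 𝔞 μ • suppInd μ) (1 : A)}

/-!
For a monomial ideal `𝔞`, the inclusion `𝔞 ⊆ √𝔟` only depends on supports: it holds iff every
monomial `X^μ ∈ 𝔞` has a monomial `X^ν ∈ 𝔟` with `supp ν ⊆ supp μ`. Each of the four conditions
is equivalent to this relation holding in both directions. For `⌊𝔞⌋` this is because `X^μ` and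
`X^(sq μ)` have the same support; for the degree restrictions, because `H` has finite index, so
`X^(H.index • μ)` always lies in `S` and has the same support as `X^μ`; and the torsion functors
`Γ_𝔠` and `Γ_𝔡` agree iff each of `𝔠`, `𝔡` contains a power of the other (test on `S ⧸ 𝔠`),
which for the finitely generated `𝔞`, `𝔟` follows from `√𝔞 = √𝔟`.
-/

section Torsion

variable {S : Type u} [CommRing S]

theorem Ideal.torsionOf_quotient_one (J : Ideal S) : Ideal.torsionOf S (S ⧸ J) 1 = J := by
  ext a
  rw [Ideal.mem_torsionOf_iff, Algebra.smul_def, mul_one, Ideal.Quotient.algebraMap_eq,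
    Ideal.Quotient.eq_zero_iff_mem]

theorem Ideal.exists_pow_le_trans {J K T : Ideal S} (hKJ : ∃ m, K ^ m ≤ J)
    (hJT : ∃ n, J ^ n ≤ T) : ∃ n, K ^ n ≤ T := by
  obtain ⟨m, hm⟩ := hKJ
  obtain ⟨n, hn⟩ := hJT
  exact ⟨m * n, by rw [pow_mul]; exact (Ideal.pow_right_mono hm n).trans hn⟩

theorem Ideal.forall_exists_pow_le_torsionOf_iff {J K : Ideal S} :
    (∀ (M : Type u) [AddCommGroup M] [Module S M] (x : M),
        (∃ n : ℕ, J ^ n ≤ Ideal.torsionOf S M x) ↔ (∃ n : ℕ, K ^ n ≤ Ideal.torsionOf S M x)) ↔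
      (∃ m : ℕ, J ^ m ≤ K) ∧ (∃ m : ℕ, K ^ m ≤ J) := by
  constructor
  · intro h
    have hJ := h (S ⧸ J) 1
    have hK := h (S ⧸ K) 1
    simp only [Ideal.torsionOf_quotient_one] at hJ hK
    exact ⟨hK.mpr ⟨1, (pow_one K).le⟩, hJ.mp ⟨1, (pow_one J).le⟩⟩
  · rintro ⟨hJK, hKJ⟩ M _ _ x
    exact ⟨Ideal.exists_pow_le_trans hKJ, Ideal.exists_pow_le_trans hJK⟩

theorem Ideal.le_radical_of_pow_le {J K : Ideal S} {n : ℕ} (h : K ^ n ≤ J) : K ≤ J.radical :=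
  fun _ hx => ⟨n, h (Ideal.pow_mem_pow hx n)⟩

end Torsion

theorem Finsupp.exists_le_nsmul_of_support_subset {I : Type v} {ν μ : I →₀ ℕ}
    (h : ν.support ⊆ μ.support) : ∃ k : ℕ, ν ≤ k • μ := by
  refine ⟨ν.support.sup ν, fun i => ?_⟩
  by_cases hi : i ∈ ν.support
  · have hμi : 1 ≤ μ i := Nat.one_le_iff_ne_zero.mpr (Finsupp.mem_support_iff.mp (h hi))
    calc ν i ≤ ν.support.sup ν := Finset.le_sup hi
      _ ≤ ν.support.sup ν * μ i := Nat.le_mul_of_pos_right _ hμi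
  · simp [Finsupp.notMem_support_iff.mp hi]

theorem support_suppInd {I : Type v} (μ : I →₀ ℕ) : (suppInd μ).support = μ.support := by
  ext i
  by_cases h : μ i = 0 <;> simp [suppInd, h]

theorem suppInd_le_suppInd {I : Type v} {ν μ : I →₀ ℕ} (h : ν.support ⊆ μ.support) :
    suppInd ν ≤ suppInd μ := by
  intro i
  by_cases hν : ν i = 0
  · simp [suppInd, hν]
  · have hμ : μ i ≠ 0 := Finsupp.mem_support_iff.mp (h (Finsupp.mem_support_iff.mpr hν))
    simp [suppInd, hν, hμ]

section Monomial

variable {A : Type u} [CommRing A] {I : Type v}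

theorem monomial_one_mem_of_le {𝔠 : Ideal (MvPolynomial I A)} {ν μ : I →₀ ℕ}
    (h : monomial ν (1 : A) ∈ 𝔠) (hle : ν ≤ μ) : monomial μ (1 : A) ∈ 𝔠 :=
  Ideal.mem_of_dvd _ (monomial_dvd_monomial.mpr ⟨Or.inr hle, one_dvd _⟩) h

def MonomialSupportLE (𝔞 𝔟 : Ideal (MvPolynomial I A)) : Prop :=
  ∀ μ : I →₀ ℕ, monomial μ (1 : A) ∈ 𝔞 →
    ∃ ν : I →₀ ℕ, monomial ν (1 : A) ∈ 𝔟 ∧ ν.support ⊆ μ.support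

theorem MonomialSupportLE.trans {𝔞 𝔟 𝔠 : Ideal (MvPolynomial I A)}
    (hab : MonomialSupportLE 𝔞 𝔟) (hbc : MonomialSupportLE 𝔟 𝔠) : MonomialSupportLE 𝔞 𝔠 := by
  intro μ hμ
  obtain ⟨ν, hν, hνμ⟩ := hab μ hμ
  obtain ⟨κ, hκ, hκν⟩ := hbc ν hν
  exact ⟨κ, hκ, hκν.trans hνμ⟩

theorem monomialSupportLE_of_le_radical {𝔞 𝔟 : Ideal (MvPolynomial I A)}
    (h : 𝔞 ≤ 𝔟.radical) : MonomialSupportLE 𝔞 𝔟 := by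
  intro μ hμ
  obtain ⟨n, hn⟩ := h hμ
  rw [monomial_pow, one_pow] at hn
  exact ⟨n • μ, hn, Finsupp.support_smul⟩

theorem le_radical_of_monomialSupportLE {𝔞 𝔟 : Ideal (MvPolynomial I A)}
    (h𝔞 : IsMonomialIdeal 𝔞) (h : MonomialSupportLE 𝔞 𝔟) : 𝔞 ≤ 𝔟.radical := by
  obtain ⟨E, rfl⟩ := h𝔞
  rw [Ideal.span_le]
  rintro _ ⟨μ, hμ, rfl⟩
  obtain ⟨ν, hν, hνμ⟩ := h μ (Ideal.subset_span ⟨μ, hμ, rfl⟩)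
  obtain ⟨k, hk⟩ := Finsupp.exists_le_nsmul_of_support_subset hνμ
  refine ⟨k, ?_⟩
  rw [monomial_pow, one_pow]
  exact monomial_one_mem_of_le hν hk

theorem radical_eq_radical_iff_monomialSupportLE {𝔞 𝔟 : Ideal (MvPolynomial I A)}
    (h𝔞 : IsMonomialIdeal 𝔞) (h𝔟 : IsMonomialIdeal 𝔟) :
    𝔞.radical = 𝔟.radical ↔ MonomialSupportLE 𝔞 𝔟 ∧ MonomialSupportLE 𝔟 𝔞 := by
  rw [le_antisymm_iff, Ideal.radical_le_radical_iff, Ideal.radical_le_radical_iff]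
  exact ⟨fun h => ⟨monomialSupportLE_of_le_radical h.1, monomialSupportLE_of_le_radical h.2⟩,
    fun h => ⟨le_radical_of_monomialSupportLE h𝔞 h.1, le_radical_of_monomialSupportLE h𝔟 h.2⟩⟩

theorem monomialSupportLE_mvFloor (𝔞 : Ideal (MvPolynomial I A)) :
    MonomialSupportLE 𝔞 (mvFloor 𝔞) :=
  fun μ hμ => ⟨suppInd μ, Ideal.subset_span ⟨μ, hμ, rfl⟩, (support_suppInd μ).subset⟩

theorem mvFloor_monomialSupportLE (𝔞 : Ideal (MvPolynomial I A)) :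
    MonomialSupportLE (mvFloor 𝔞) 𝔞 := by
  intro τ hτ
  rcases subsingleton_or_nontrivial A with hA | hA
  · exact ⟨τ, by simp [Subsingleton.elim (1 : A) 0], subset_rfl⟩
  classical
  have hspan : mvFloor 𝔞 = Ideal.span ((fun d => monomial d (1 : A)) ''
      (suppInd '' {μ : I →₀ ℕ | monomial μ (1 : A) ∈ 𝔞})) := by
    rw [mvFloor, Set.image_image]
    congr 1
    ext
    simp [eq_comm]
  rw [hspan, mem_ideal_span_monomial_image] at hτ
  obtain ⟨_, ⟨ν, hν, rfl⟩, hντ⟩ := hτ τ (by simp)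
  exact ⟨ν, hν, (support_suppInd ν).symm.subset.trans (Finsupp.support_mono hντ)⟩

theorem mvFloor_le_mvFloor {𝔞 𝔟 : Ideal (MvPolynomial I A)} (h : MonomialSupportLE 𝔞 𝔟) :
    mvFloor 𝔞 ≤ mvFloor 𝔟 := by
  rw [mvFloor, Ideal.span_le]
  rintro _ ⟨μ, hμ, rfl⟩
  obtain ⟨ν, hν, hνμ⟩ := h μ hμ
  exact monomial_one_mem_of_le (Ideal.subset_span ⟨ν, hν, rfl⟩) (suppInd_le_suppInd hνμ)

end Monomial

section DegRestrict

variable {A : Type u} [CommRing A] {I : Type v} {G : Type w} [AddCommGroup G]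
  (ψ : (I →₀ ℤ) →+ G) (H : AddSubgroup G)

theorem natToInt_nsmul (c : ℕ) (μ : I →₀ ℕ) : natToInt (c • μ) = c • natToInt μ := by
  ext i
  simp [natToInt]

theorem monomial_index_nsmul_mem_degRestrict (μ : I →₀ ℕ) :
    monomial (H.index • μ) (1 : A) ∈ degRestrict A ψ H :=
  Algebra.subset_adjoin ⟨H.index • μ, by rw [natToInt_nsmul, map_nsmul]; exact H.nsmul_index_mem _, rfl⟩

theorem idealRestrict_pow_le {𝔞 𝔟 : Ideal (MvPolynomial I A)} {n : ℕ} (h : 𝔞 ^ n ≤ 𝔟) :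
    idealRestrict ψ H 𝔞 ^ n ≤ idealRestrict ψ H 𝔟 :=
  (Ideal.le_comap_pow _ n).trans (Ideal.comap_mono h)

variable {ψ H}

theorem MonomialSupportLE.of_idealRestrict_le_radical (hH : H.FiniteIndex)
    {𝔞 𝔟 : Ideal (MvPolynomial I A)}
    (h : idealRestrict ψ H 𝔞 ≤ (idealRestrict ψ H 𝔟).radical) : MonomialSupportLE 𝔞 𝔟 := by
  intro μ hμ
  have hmem : (⟨_, monomial_index_nsmul_mem_degRestrict ψ H μ⟩ : degRestrict A ψ H) ∈
      idealRestrict ψ H 𝔞 :=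
    monomial_one_mem_of_le hμ (le_self_nsmul zero_le hH.index_ne_zero)
  obtain ⟨n, hn⟩ := h hmem
  refine ⟨n • H.index • μ, ?_, Finsupp.support_smul.trans Finsupp.support_smul⟩
  simpa [idealRestrict, monomial_pow] using hn

end DegRestrict

theorem torsion_restrict_eq_iff_radical_eq_iff_floor_eq_iff_floorRestrict_eq_general
    {A : Type u} [CommRing A] {I : Type v}
    {G : Type w} [AddCommGroup G] (ψ : (I →₀ ℤ) →+ G)
    (H : AddSubgroup G) (hH : H.FiniteIndex)
    (𝔞 𝔟 : Ideal (MvPolynomial I A)) (h𝔞 : IsMonomialIdeal 𝔞) (h𝔟 : IsMonomialIdeal 𝔟)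
    (hfg𝔞 : 𝔞.FG) (hfg𝔟 : 𝔟.FG) :
    List.TFAE
      [∀ (M : Type (max u v)) [AddCommGroup M] [Module (degRestrict A ψ H) M] (x : M),
          (∃ n : ℕ, (idealRestrict ψ H 𝔞) ^ n ≤ Ideal.torsionOf (degRestrict A ψ H) M x) ↔
            (∃ n : ℕ, (idealRestrict ψ H 𝔟) ^ n ≤ Ideal.torsionOf (degRestrict A ψ H) M x),
        𝔞.radical = 𝔟.radical,
        mvFloor 𝔞 = mvFloor 𝔟,
        idealRestrict ψ H (mvFloor 𝔞) = idealRestrict ψ H (mvFloor 𝔟)] := by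
  have radical_iff := radical_eq_radical_iff_monomialSupportLE h𝔞 h𝔟
  tfae_have 1 → 2 := fun h1 => by
    obtain ⟨⟨m, hm⟩, ⟨n, hn⟩⟩ := Ideal.forall_exists_pow_le_torsionOf_iff.mp h1
    exact radical_iff.mpr ⟨.of_idealRestrict_le_radical hH (Ideal.le_radical_of_pow_le hm),
      .of_idealRestrict_le_radical hH (Ideal.le_radical_of_pow_le hn)⟩
  tfae_have 2 → 1 := fun h2 => by
    obtain ⟨m, hm⟩ := Ideal.exists_pow_le_of_le_radical_of_fg (h2 ▸ 𝔞.le_radical) hfg𝔞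
    obtain ⟨n, hn⟩ := Ideal.exists_pow_le_of_le_radical_of_fg (h2 ▸ 𝔟.le_radical) hfg𝔟
    exact Ideal.forall_exists_pow_le_torsionOf_iff.mpr
      ⟨⟨m, idealRestrict_pow_le ψ H hm⟩, ⟨n, idealRestrict_pow_le ψ H hn⟩⟩
  tfae_have 2 → 3 := fun h2 =>
    le_antisymm (mvFloor_le_mvFloor (radical_iff.mp h2).1) (mvFloor_le_mvFloor (radical_iff.mp h2).2)
  tfae_have 3 → 4 := fun h3 => by rw [h3]
  tfae_have 4 → 2 := fun h4 => by
    have hab := MonomialSupportLE.of_idealRestrict_le_radical hH (h4.le.trans Ideal.le_radical)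
    have hba := MonomialSupportLE.of_idealRestrict_le_radical hH (h4.ge.trans Ideal.le_radical)
    exact radical_iff.mpr
      ⟨((monomialSupportLE_mvFloor 𝔞).trans hab).trans (mvFloor_monomialSupportLE 𝔟),
        ((monomialSupportLE_mvFloor 𝔟).trans hba).trans (mvFloor_monomialSupportLE 𝔞)⟩
  tfae_finish

/-- (Proposition 2.40 a)): for finitely generated monomial ideals
`𝔞, 𝔟` of `R = A[(X_i)_{i ∈ I}]` and `H ≤ G` of finite index, the following are
equivalent: (i) `Γ_{𝔞_(H)} = Γ_{𝔟_(H)}` over `S = R_(H)`; (ii) `√𝔞 = √𝔟`;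
(iii) `⌊𝔞⌋ = ⌊𝔟⌋`; (iv) `⌊𝔞⌋_(H) = ⌊𝔟⌋_(H)`. -/
theorem torsion_restrict_eq_iff_radical_eq_iff_floor_eq_iff_floorRestrict_eq
    {A : Type u} [CommRing A] {I : Type v}
    {G : Type w} [AddCommGroup G] (ψ : (I →₀ ℤ) →+ G) (hψ : Function.Surjective ψ)
    (H : AddSubgroup G) (hH : H.FiniteIndex)
    (𝔞 𝔟 : Ideal (MvPolynomial I A)) (h𝔞 : IsMonomialIdeal 𝔞) (h𝔟 : IsMonomialIdeal 𝔟)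
    (hfg𝔞 : 𝔞.FG) (hfg𝔟 : 𝔟.FG) :
    List.TFAE
      [∀ (M : Type (max u v)) [AddCommGroup M] [Module (degRestrict A ψ H) M] (x : M),
          (∃ n : ℕ, (idealRestrict ψ H 𝔞) ^ n ≤ Ideal.torsionOf (degRestrict A ψ H) M x) ↔
            (∃ n : ℕ, (idealRestrict ψ H 𝔟) ^ n ≤ Ideal.torsionOf (degRestrict A ψ H) M x),
        𝔞.radical = 𝔟.radical,
        mvFloor 𝔞 = mvFloor 𝔟,
        idealRestrict ψ H (mvFloor 𝔞) = idealRestrict ψ H (mvFloor 𝔟)] :=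
  torsion_restrict_eq_iff_radical_eq_iff_floor_eq_iff_floorRestrict_eq_general ψ H hH 𝔞 𝔟 h𝔞 h𝔟 hfg𝔞
    hfg𝔟
end
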